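/- Let g satisfy 0 ≤ g(p) < 1, g(p) ≤ C/p for all primes p, and ∑_{p ≤ y} g(p) = log log y + e + O((log y)^{-10}). Then the product H = ∏_p (1 - g(p))(1 - 1/p)^{-1} over all primes converges to a positive real number. -/

import Mathlib

/-!
Taking logarithms, `log ∏ (1 - g p)(1 - 1/p)⁻¹` splits as
`∑ (log (1 - g p) + g p) - ∑ (log (1 - 1/p) + 1/p) + (∑ 1/p - log log n) - (∑ g p - log log n)`.
The first two sums converge absolutely since their terms are `O(1/p²)`, the last bracket tends
to `e` by hypothesis, and the third tends to a constant by Mertens' second theorem. The latter is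
proved from Mertens' first theorem `∑_{p ≤ n} log p / p = log n + O(1)` by partial summation
against `1 / log n`; Mertens' first theorem in turn comes from Chebyshev's identity
`log n! = ∑_{d ≤ n} Λ d ⌊n / d⌋`, Chebyshev's bound `ψ x = O(x)` and the convergence of
`∑ Λ d / d` over prime powers that are not primes.
-/

open Finset Real Filter Topology
open ArithmeticFunction hiding log

theorem log_factorial_eq_sum_log (n : ℕ) : log n.factorial = ∑ m ∈ Ioc 0 n, log m := by
  induction n with
  | zero => simp
  | succ n ih =>
    rw [Nat.factorial_succ, Nat.cast_mul, log_mul (by positivity) (by positivity),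
      sum_Ioc_succ_top n.zero_le, ih, add_comm]

theorem log_factorial_eq_sum_vonMangoldt_mul_div (n : ℕ) :
    log n.factorial = ∑ d ∈ Ioc 0 n, Λ d * (n / d : ℕ) := calc
  log n.factorial = ∑ m ∈ Ioc 0 n, ∑ d ∈ m.divisors, Λ d := by
    simp only [log_factorial_eq_sum_log, vonMangoldt_sum]
  _ = ∑ d ∈ Ioc 0 n, ∑ m ∈ Ioc 0 n with d ∣ m, Λ d := by
    refine sum_comm' fun m d ↦ ?_
    simp only [mem_Ioc, Nat.mem_divisors, mem_filter]
    constructor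
    · rintro ⟨⟨hm, hmn⟩, hdm, -⟩
      exact ⟨⟨⟨hm, hmn⟩, hdm⟩, Nat.pos_of_dvd_of_pos hdm hm,
        (Nat.le_of_dvd hm hdm).trans hmn⟩
    · rintro ⟨⟨⟨hm, hmn⟩, hdm⟩, -⟩
      exact ⟨⟨hm, hmn⟩, hdm, hm.ne'⟩
  _ = ∑ d ∈ Ioc 0 n, Λ d * (n / d : ℕ) := by
    simp only [sum_const, Nat.Ioc_filter_dvd_card_eq_div, nsmul_eq_mul, mul_comm]

theorem log_factorial_le (n : ℕ) : log n.factorial ≤ n * log n := by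
  rw [← log_pow]
  exact log_le_log (by positivity) (by exact_mod_cast Nat.factorial_le_pow n)

theorem le_log_factorial (n : ℕ) : n * log n - n ≤ log n.factorial := by
  rcases n.eq_zero_or_pos with rfl | hn
  · simp
  have h := pow_div_factorial_le_exp (n : ℝ) n.cast_nonneg n
  rw [div_le_iff₀ (by positivity)] at h
  have := log_le_log (by positivity) h
  rw [log_pow, log_mul (by positivity) (by positivity), log_exp] at this
  linarith

theorem abs_sum_vonMangoldt_div_sub_log_le (n : ℕ) :
    |∑ d ∈ Ioc 0 n, Λ d / d - log n| ≤ log 4 + 4 := by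
  rcases n.eq_zero_or_pos with rfl | hn
  · simp only [Ioc_self, sum_empty, Nat.cast_zero, log_zero, sub_zero, abs_zero]
    positivity
  set S := ∑ d ∈ Ioc 0 n, Λ d / d
  have hn : (0 : ℝ) < n := by exact_mod_cast hn
  have hupper : log n.factorial ≤ n * S := by
    rw [log_factorial_eq_sum_vonMangoldt_mul_div, mul_sum]
    refine sum_le_sum fun d _ ↦ ?_
    rw [mul_div_left_comm]
    exact mul_le_mul_of_nonneg_left Nat.cast_div_le vonMangoldt_nonneg
  have hlower : n * S - Chebyshev.psi n ≤ log n.factorial := by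
    rw [log_factorial_eq_sum_vonMangoldt_mul_div, Chebyshev.psi, Nat.floor_natCast, mul_sum,
      ← sum_sub_distrib]
    refine sum_le_sum fun d _ ↦ ?_
    have : (n / d : ℝ) - 1 ≤ (n / d : ℕ) := by
      rw [← Nat.floor_div_eq_div (K := ℝ)]; exact (Nat.sub_one_lt_floor _).le
    rw [mul_div_left_comm]
    nlinarith [vonMangoldt_nonneg (n := d)]
  have hpsi := Chebyshev.psi_le_const_mul_self (x := n) hn.le
  have hS_ge : log n - 1 ≤ S :=
    le_of_mul_le_mul_left (by linarith [le_log_factorial n]) hn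
  have hS_le : S ≤ log n + (log 4 + 4) :=
    le_of_mul_le_mul_left (by linarith [log_factorial_le n]) hn
  rw [abs_le]
  constructor <;> linarith [log_pos (by norm_num : (1 : ℝ) < 4)]

theorem summable_nonprime_vonMangoldt_div :
    Summable fun d : ℕ ↦ (if d.Prime then 0 else Λ d) / d := by
  -- Modulo `1` the residue class is all of `ℕ`.
  have hΛ (d : ℕ) : vonMangoldt.residueClass (0 : ZMod 1) d = Λ d :=
    Set.indicator_of_mem (s := {n : ℕ | (n : ZMod 1) = 0}) (Subsingleton.elim _ _) _
  simpa only [hΛ] using vonMangoldt.summable_residueClass_non_primes_div (0 : ZMod 1)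

theorem sum_primesLE_eq_sum_Ioc (f : ℕ → ℝ) (n : ℕ) :
    ∑ p ∈ Nat.primesLE n, f p = ∑ i ∈ Ioc 0 n, if i.Prime then f i else 0 := by
  rw [Nat.primesLE_eq_filter_Ioc_zero, sum_filter]

theorem exists_abs_sum_primesLE_log_div_sub_log_le :
    ∃ K, ∀ n, |∑ p ∈ Nat.primesLE n, log p / p - log n| ≤ K := by
  set c : ℕ → ℝ := fun d ↦ (if d.Prime then 0 else Λ d) / d
  have hc0 : ∀ d, 0 ≤ c d := fun d ↦ by positivity [vonMangoldt_nonneg (n := d)]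
  refine ⟨log 4 + 4 + ∑' d, c d, fun n ↦ ?_⟩
  have hsplit :
      ∑ d ∈ Ioc 0 n, Λ d / d = ∑ p ∈ Nat.primesLE n, log p / p + ∑ d ∈ Ioc 0 n, c d := by
    rw [sum_primesLE_eq_sum_Ioc, ← sum_add_distrib]
    refine sum_congr rfl fun d _ ↦ ?_
    split_ifs with hd <;> simp [c, hd, vonMangoldt_apply_prime]
  have hle : ∑ d ∈ Ioc 0 n, c d ≤ ∑' d, c d :=
    summable_nonprime_vonMangoldt_div.sum_le_tsum _ fun d _ ↦ hc0 d
  have hmain := abs_sum_vonMangoldt_div_sub_log_le n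
  rw [hsplit] at hmain
  rw [abs_le] at hmain ⊢
  constructor <;> linarith [sum_nonneg fun d (_ : d ∈ Ioc 0 n) ↦ hc0 d]

theorem sum_Ioc_mul_eq_by_parts {R : Type*} [CommRing R] (a b : ℕ → R) (n : ℕ) :
    ∑ i ∈ Ioc 0 n, a i * b i = (∑ i ∈ Ioc 0 n, a i) * b n +
      ∑ i ∈ range n, (∑ j ∈ Ioc 0 i, a j) * (b i - b (i + 1)) := by
  induction n with
  | zero => simp
  | succ n ih =>
    rw [sum_Ioc_succ_top n.zero_le, sum_Ioc_succ_top n.zero_le, sum_range_succ, ih]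
    ring

theorem summable_sub_succ_of_antitone {f : ℕ → ℝ} (hf : Antitone f) (h0 : ∀ n, 0 ≤ f n) :
    Summable fun n ↦ f n - f (n + 1) :=
  summable_of_sum_range_le (fun n ↦ sub_nonneg.2 (hf n.le_succ))
    fun n ↦ by rw [sum_range_sub']; linarith [h0 n]

theorem abs_one_sub_div_sub_log_div_le {x y : ℝ} (hx : 0 < x) (hxy : x ≤ y) :
    |(1 - x / y) - log (y / x)| ≤ ((y - x) / x) ^ 2 := by
  set t := y / x with ht
  have ht1 : 1 ≤ t := by rw [ht, le_div_iff₀ hx]; linarith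
  have hxy' : x / y = t⁻¹ := by rw [ht, inv_div]
  have hyx : (y - x) / x = t - 1 := by rw [ht, sub_div, div_self hx.ne']
  have hlog_ge := one_sub_inv_le_log_of_pos (by linarith : 0 < t)
  have hlog_le := log_le_sub_one_of_pos (by linarith : 0 < t)
  rw [hxy', hyx, abs_sub_comm, abs_of_nonneg (by linarith)]
  have : t - 1 - (1 - t⁻¹) = (t - 1) ^ 2 / t := by field_simp
  have : (t - 1) ^ 2 / t ≤ (t - 1) ^ 2 := div_le_self (sq_nonneg _) ht1
  linarith

theorem log_succ_sub_log_le (i : ℕ) (hi : 0 < i) : log (i + 1 : ℕ) - log i ≤ (i : ℝ)⁻¹ := by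
  have hi : (0 : ℝ) < i := by exact_mod_cast hi
  rw [← log_div (by positivity) hi.ne']
  refine (log_le_sub_one_of_pos (by positivity)).trans_eq ?_
  push_cast
  field_simp
  ring

theorem abs_log_mul_sub_inv_log_sub_le (i : ℕ) (hi : 2 ≤ i) :
    |log i * ((log i)⁻¹ - (log (i + 1 : ℕ))⁻¹) - (log (log (i + 1 : ℕ)) - log (log i))| ≤
      (log 2)⁻¹ ^ 2 * ((i : ℝ) ^ 2)⁻¹ := by
  have h2 : (2 : ℝ) ≤ i := by exact_mod_cast hi
  have hlog2 : 0 < log 2 := log_pos one_lt_two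
  have hlogi : log 2 ≤ log i := log_le_log two_pos h2
  have hmono : log i ≤ log (i + 1 : ℕ) := log_le_log (by positivity) (by push_cast; linarith)
  have hid : log i * ((log i)⁻¹ - (log (i + 1 : ℕ))⁻¹) = 1 - log i / log (i + 1 : ℕ) := by
    field_simp [(by linarith : log i ≠ 0)]
  rw [hid, ← log_div (by linarith) (by linarith)]
  calc _ ≤ ((log (i + 1 : ℕ) - log i) / log i) ^ 2 :=
        abs_one_sub_div_sub_log_div_le (by linarith) hmono
    _ ≤ ((i : ℝ)⁻¹ / log 2) ^ 2 := by
        gcongr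
        exact log_succ_sub_log_le i (by omega)
    _ = (log 2)⁻¹ ^ 2 * ((i : ℝ) ^ 2)⁻¹ := by ring

theorem summable_inv_log_sub_inv_log_succ :
    Summable fun i : ℕ ↦ (log i)⁻¹ - (log (i + 1 : ℕ))⁻¹ := by
  refine (summable_nat_add_iff 2).mp ?_
  refine summable_sub_succ_of_antitone (f := fun n : ℕ ↦ (log (n + 2 : ℕ))⁻¹) ?_
    fun n ↦ inv_nonneg.2 (log_natCast_nonneg _)
  refine antitone_nat_of_succ_le fun n ↦ inv_anti₀ (log_pos (by push_cast; linarith)) ?_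
  exact log_le_log (by positivity) (by push_cast; linarith)

theorem exists_tendsto_sum_div_log_sub_log_log {a : ℕ → ℝ} {K : ℝ}
    (hK : ∀ n, |∑ i ∈ Ioc 0 n, a i - log n| ≤ K) :
    ∃ M, Tendsto (fun n : ℕ ↦ ∑ i ∈ Ioc 0 n, a i / log i - log (log n)) atTop (𝓝 M) := by
  set A : ℕ → ℝ := fun n ↦ ∑ i ∈ Ioc 0 n, a i
  set b : ℕ → ℝ := fun i ↦ (log i)⁻¹
  set u : ℕ → ℝ := fun i ↦ A i * (b i - b (i + 1)) - (log (log (i + 1 : ℕ)) - log (log i))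
  have hu : Summable u := by
    refine .of_norm_bounded_eventually_nat
      ((summable_inv_log_sub_inv_log_succ.mul_left K).add
        ((summable_nat_pow_inv.2 one_lt_two).mul_left ((log 2)⁻¹ ^ 2))) ?_
    filter_upwards [eventually_ge_atTop 2] with i hi
    have hb : 0 ≤ b i - b (i + 1) := sub_nonneg.2 <| inv_anti₀
      (log_pos (by exact_mod_cast hi)) (log_le_log (by positivity) (by push_cast; linarith))
    have hsplit : u i = (A i - log i) * (b i - b (i + 1)) + (log i * (b i - b (i + 1)) -
        (log (log (i + 1 : ℕ)) - log (log i))) := by ring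
    rw [hsplit, norm_eq_abs]
    refine (abs_add_le _ _).trans (add_le_add ?_ (abs_log_mul_sub_inv_log_sub_le i hi))
    rw [abs_mul, abs_of_nonneg hb]
    exact mul_le_mul_of_nonneg_right (hK i) hb
  -- Valid for every `n` thanks to the junk values `b 0 = b 1 = 0` and `log (log 0) = 0`.
  have hdecomp : ∀ n, ∑ i ∈ Ioc 0 n, a i / log i - log (log n) =
      A n * b n + ∑ i ∈ range n, u i := by
    intro n
    have hparts := sum_Ioc_mul_eq_by_parts a b n
    simp only [u, sum_sub_distrib, sum_range_sub (fun i : ℕ ↦ log (log i)), Nat.cast_zero,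
      log_zero, div_eq_mul_inv]
    linarith
  have hAb : Tendsto (fun n ↦ A n * b n) atTop (𝓝 1) := by
    have hlog : Tendsto (fun n : ℕ ↦ log n) atTop atTop :=
      tendsto_log_atTop.comp tendsto_natCast_atTop_atTop
    have hR : Tendsto (fun n ↦ b n * (A n - log n)) atTop (𝓝 0) :=
      hlog.inv_tendsto_atTop.zero_mul_isBoundedUnder_le ⟨K, eventually_map.2 (.of_forall hK)⟩
    refine (add_zero (1 : ℝ) ▸ hR.const_add 1).congr' ?_
    filter_upwards [eventually_ge_atTop 2] with n hn
    have : log n ≠ 0 := (log_pos (by exact_mod_cast hn)).ne'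
    simp only [b]
    field_simp
    ring
  exact ⟨1 + ∑' i, u i, by simpa only [hdecomp] using hAb.add hu.hasSum.tendsto_sum_nat⟩

theorem exists_tendsto_sum_primesLE_inv_sub_log_log :
    ∃ M, Tendsto (fun n : ℕ ↦ ∑ p ∈ Nat.primesLE n, (p : ℝ)⁻¹ - log (log n)) atTop (𝓝 M) := by
  obtain ⟨K, hK⟩ := exists_abs_sum_primesLE_log_div_sub_log_le
  obtain ⟨M, hM⟩ := exists_tendsto_sum_div_log_sub_log_log (K := K)
    (a := fun i ↦ if i.Prime then log i / i else 0) (by simpa [sum_primesLE_eq_sum_Ioc] using hK)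
  refine ⟨M, hM.congr fun n ↦ ?_⟩
  rw [sum_primesLE_eq_sum_Ioc]
  congr 1
  refine sum_congr rfl fun i _ ↦ ?_
  split_ifs with hi
  · have : log i ≠ 0 := (log_pos (by exact_mod_cast hi.one_lt)).ne'
    field_simp
  · simp

theorem abs_log_one_sub_add_le {x : ℝ} (h0 : 0 ≤ x) (h1 : x ≤ 1 / 2) :
    |log (1 - x) + x| ≤ 2 * x ^ 2 := by
  have h := abs_log_sub_add_sum_range_le (show |x| < 1 by rw [abs_of_nonneg h0]; linarith) 1
  rw [abs_of_nonneg h0] at h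
  simp only [sum_range_one, zero_add, pow_one, Nat.cast_zero, div_one, one_add_one_eq_two] at h
  rw [add_comm]
  refine h.trans ?_
  rw [div_le_iff₀ (by linarith)]
  nlinarith [sq_nonneg x]

theorem exists_tendsto_sum_primesLE_log_one_sub_add {h : ℕ → ℝ} {C : ℝ}
    (h0 : ∀ p : ℕ, p.Prime → 0 ≤ h p) (hC : ∀ p : ℕ, p.Prime → h p ≤ C / p) :
    ∃ L, Tendsto (fun n ↦ ∑ p ∈ Nat.primesLE n, (log (1 - h p) + h p)) atTop (𝓝 L) := by
  set f : ℕ → ℝ := fun i ↦ if i.Prime then log (1 - h i) + h i else 0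
  have hf : Summable f := by
    refine .of_norm_bounded_eventually_nat
      ((summable_nat_pow_inv.2 one_lt_two).mul_left (2 * C ^ 2)) ?_
    filter_upwards [eventually_gt_atTop 0,
      tendsto_natCast_atTop_atTop.eventually_ge_atTop (2 * C)] with i hi hCi
    by_cases hp : i.Prime
    · have hi : (0 : ℝ) < i := by exact_mod_cast hi
      have hhalf : h i ≤ 1 / 2 := (hC i hp).trans (by rw [div_le_div_iff₀ hi two_pos]; linarith)
      have hsq : h i ^ 2 ≤ (C / i) ^ 2 := pow_le_pow_left₀ (h0 i hp) (hC i hp) 2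
      simp only [f, hp, if_true, norm_eq_abs]
      refine (abs_log_one_sub_add_le (h0 i hp) hhalf).trans ?_
      rw [div_pow] at hsq
      rw [mul_assoc, ← div_eq_mul_inv]
      linarith
    · simp only [f, hp, if_false, norm_zero]
      positivity
  refine ⟨∑' i, f i, (hf.hasSum.tendsto_sum_nat.comp (tendsto_add_atTop_nat 1)).congr fun n ↦ ?_⟩
  simp [f, Nat.primesLE_eq_filter_range, sum_filter]

theorem tendsto_sub_of_abs_sub_le_mul_log_rpow_neg {S F : ℝ → ℝ} {C κ y₀ : ℝ} (hκ : 0 < κ)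
    (h : ∀ y, y₀ ≤ y → |S y - F y| ≤ C * log y ^ (-κ)) :
    Tendsto (fun y ↦ S y - F y) atTop (𝓝 0) := by
  have hbound : Tendsto (fun y ↦ C * log y ^ (-κ)) atTop (𝓝 0) := by
    simpa using ((tendsto_rpow_neg_atTop hκ).comp tendsto_log_atTop).const_mul C
  exact squeeze_zero_norm' ((eventually_ge_atTop y₀).mono h) hbound

theorem prod_primesLE_eq_exp_sum {g : ℕ → ℝ} (hlt : ∀ p : ℕ, p.Prime → g p < 1) (n : ℕ) :
    ∏ p ∈ Nat.primesLE n, (1 - g p) * (1 - 1 / (p : ℝ))⁻¹ =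
      exp (∑ p ∈ Nat.primesLE n, (log (1 - g p) + g p) -
        ∑ p ∈ Nat.primesLE n, (log (1 - 1 / (p : ℝ)) + 1 / (p : ℝ)) +
        ∑ p ∈ Nat.primesLE n, (p : ℝ)⁻¹ - ∑ p ∈ Nat.primesLE n, g p) := by
  have hpos : ∀ p ∈ Nat.primesLE n, 0 < 1 - g p ∧ 0 < 1 - 1 / (p : ℝ) := fun p hp ↦ by
    have hp := Nat.prime_of_mem_primesLE hp
    exact ⟨sub_pos.2 (hlt p hp),
      sub_pos.2 ((div_lt_one (by exact_mod_cast hp.pos)).2 (by exact_mod_cast hp.one_lt))⟩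
  have hlog : ∀ p ∈ Nat.primesLE n, log ((1 - g p) * (1 - 1 / (p : ℝ))⁻¹) =
      log (1 - g p) - log (1 - 1 / (p : ℝ)) := fun p hp ↦ by
    rw [log_mul (hpos p hp).1.ne' (inv_pos.2 (hpos p hp).2).ne', log_inv, ← sub_eq_add_neg]
  have hterm : ∀ p ∈ Nat.primesLE n, 0 < (1 - g p) * (1 - 1 / (p : ℝ))⁻¹ := fun p hp ↦
    mul_pos (hpos p hp).1 (inv_pos.2 (hpos p hp).2)
  rw [← exp_log (prod_pos hterm), log_prod fun p hp ↦ (hterm p hp).ne', sum_congr rfl hlog]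
  simp only [sum_add_distrib, sum_sub_distrib, one_div]
  congr 1
  ring

theorem stmt19 (g : ℕ → ℝ) (C e : ℝ)
    (hnonneg : ∀ p : ℕ, p.Prime → 0 ≤ g p)
    (hlt : ∀ p : ℕ, p.Prime → g p < 1)
    (hbd : ∀ p : ℕ, p.Prime → g p ≤ C / p)
    (hmertens : ∃ C' : ℝ, ∀ y : ℝ, 3 ≤ y →
      |(∑ p ∈ (Finset.range (⌊y⌋₊ + 1)).filter Nat.Prime, g p) -
        (Real.log (Real.log y) + e)| ≤ C' * (Real.log y) ^ (-(10 : ℝ))) :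
    ∃ H : ℝ, 0 < H ∧
      Tendsto
        (fun N : ℕ => ∏ p ∈ (Finset.range N).filter Nat.Prime,
          (1 - g p) * (1 - 1 / (p : ℝ))⁻¹)
        atTop (nhds H) := by
  obtain ⟨L₁, hg⟩ := exists_tendsto_sum_primesLE_log_one_sub_add hnonneg hbd
  obtain ⟨L₂, hinv⟩ := exists_tendsto_sum_primesLE_log_one_sub_add (C := 1)
    (h := fun p : ℕ ↦ 1 / (p : ℝ)) (fun p _ ↦ by positivity) (fun p _ ↦ le_rfl)
  obtain ⟨M, hM⟩ := exists_tendsto_sum_primesLE_inv_sub_log_log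
  obtain ⟨C', hC'⟩ := hmertens
  have herr : Tendsto (fun n : ℕ ↦ ∑ p ∈ Nat.primesLE n, g p - (log (log n) + e)) atTop (𝓝 0) := by
    have := (tendsto_sub_of_abs_sub_le_mul_log_rpow_neg (by norm_num) hC').comp
      tendsto_natCast_atTop_atTop
    simpa only [Function.comp_def, Nat.floor_natCast, ← Nat.primesLE_eq_filter_range] using this
  exact ⟨_, exp_pos _, (tendsto_add_atTop_iff_nat 1).mp <|
    ((hg.sub hinv).add ((hM.sub herr).sub_const e)).rexp.congr fun n ↦ by
      rw [← Nat.primesLE_eq_filter_range, prod_primesLE_eq_exp_sum hlt]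
      congr 1
      ring⟩
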